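/- arXiv:0808.3751 — 4 statements merged into one kernel-verified Lean document; each statement's English description precedes it below -/
import Mathlib

section
/- Let q > 1, p = q/(q-1), and g ∈ L^p(P) with g = 1 - f for f ∈ K̄₀. For every u ∈ L^q(P) annihilating K̄₀ with E[u] = 1, one has E[u g] = 1, and consequently by Hölder's inequality ‖u‖_q ≥ 1/‖g‖_p. Hence u* = g*/E[g*] (where g* = sgn(g)|g|^{p-1}) has minimal L^q-norm among all such u. -/
/-!
Since `u` annihilates `K ∋ f` and has mean one, `E[u g] = E[u] - E[u f] = 1`, and Hölder gives
`1 ≤ ‖u‖_q ‖g‖_p`. Writing `g* = sign g |g|^(p-1)`, one has `‖g*/c‖_q = ‖g‖_p^(p/q) / c` and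
`E[g*] = E[g* g] + E[g* f] = ‖g‖_p^p + E[g* f]`. Minimality of `‖1 - f‖_p` along
`1 - (1 - t) f = g + t f` gives `E[g* f] ≥ 0`: the tangent line of the convex function `|·|^p`
at `g + t f` bounds `‖g + t f‖_p^p - ‖g‖_p^p` by `p t E[(g + t f)* f]`, and one lets `t ↓ 0`.
Hence `E[g*] ≥ ‖g‖_p^p` and `‖g*/E[g*]‖_q ≤ 1/‖g‖_p`.
-/

open MeasureTheory ENNReal Filter Set

theorem ConvexOn.add_deriv_mul_sub_le {f : ℝ → ℝ} {f' y : ℝ} (hf : ConvexOn ℝ univ f)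
    (hd : HasDerivAt f f' y) (x : ℝ) : f y + f' * (x - y) ≤ f x := by
  rcases lt_trichotomy y x with hyx | rfl | hxy
  · have h := hf.le_slope_of_hasDerivAt (mem_univ y) (mem_univ x) hyx hd
    rw [slope_def_field, le_div_iff₀ (sub_pos.2 hyx)] at h
    linarith
  · simp
  · have h := hf.slope_le_of_hasDerivAt (mem_univ x) (mem_univ y) hxy hd
    rw [slope_def_field, div_le_iff₀ (sub_pos.2 hxy)] at h
    linarith

theorem convexOn_abs_rpow {p : ℝ} (hp : 1 ≤ p) : ConvexOn ℝ univ fun x : ℝ => |x| ^ p := by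
  have himage : (abs : ℝ → ℝ) '' univ = Ici 0 := by rw [image_univ]; exact range_norm (E := ℝ)
  refine ConvexOn.comp (g := fun x : ℝ => x ^ p) ?_ (convexOn_norm convex_univ) ?_
  · rw [himage]; exact convexOn_rpow hp
  · rw [himage]; exact Real.monotoneOn_rpow_Ici_of_exponent_nonneg (by linarith)

theorem Real.sign_mul_self_eq_abs (x : ℝ) : Real.sign x * x = |x| := by
  rcases lt_trichotomy x 0 with h | rfl | h
  · rw [Real.sign_of_neg h, abs_of_neg h]; ring
  · simp
  · rw [Real.sign_of_pos h, abs_of_pos h]; ring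

/-- The paper's `g*` is `signPow p g`. -/
noncomputable def signPow (p x : ℝ) : ℝ := Real.sign x * |x| ^ (p - 1)

section signPow

variable {p : ℝ}

theorem signPow_mul_self (hp : p ≠ 0) (x : ℝ) : signPow p x * x = |x| ^ p := by
  rw [signPow, mul_right_comm, Real.sign_mul_self_eq_abs, mul_comm,
    ← Real.rpow_add_one' (abs_nonneg x) (by simpa using hp), sub_add_cancel]

theorem hasDerivAt_abs_rpow_signPow (hp : 1 < p) (x : ℝ) :
    HasDerivAt (fun x : ℝ => |x| ^ p) (p * signPow p x) x := by
  convert hasDerivAt_abs_rpow x hp using 1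
  rcases eq_or_ne x 0 with rfl | hx
  · simp [signPow]
  · have h : |x| ^ (p - 1) = |x| ^ (p - 2) * |x| := by
      rw [← Real.rpow_add_one (abs_ne_zero.2 hx)]; ring_nf
    rcases lt_or_gt_of_ne hx with hx | hx
    · rw [signPow, h, Real.sign_of_neg hx, abs_of_neg hx]; ring
    · rw [signPow, h, Real.sign_of_pos hx, abs_of_pos hx]; ring

theorem continuous_signPow (hp : 1 < p) : Continuous (signPow p) := by
  have h : signPow p = fun x => p⁻¹ * deriv (fun x : ℝ => ‖x‖ ^ p) x := by
    ext x
    simp only [Real.norm_eq_abs, (hasDerivAt_abs_rpow_signPow hp x).deriv]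
    field_simp
  rw [h]
  exact continuous_const.mul ((contDiff_norm_rpow hp).continuous_deriv le_rfl)

theorem abs_signPow (hp : p ≠ 1) (x : ℝ) : |signPow p x| = |x| ^ (p - 1) := by
  rcases eq_or_ne x 0 with rfl | hx
  · simp [signPow, Real.zero_rpow (sub_ne_zero.2 hp)]
  · rcases Real.sign_apply_eq_of_ne_zero x hx with h | h <;>
      simp [signPow, h, abs_of_nonneg (Real.rpow_nonneg (abs_nonneg x) _)]

theorem abs_rpow_add_mul_signPow_le (hp : 1 < p) (x y : ℝ) :
    |y| ^ p + p * signPow p y * (x - y) ≤ |x| ^ p :=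
  (convexOn_abs_rpow hp.le).add_deriv_mul_sub_le (hasDerivAt_abs_rpow_signPow hp y) x

end signPow

section Integral

variable {Ω : Type*} [MeasurableSpace Ω] {P : Measure Ω} {p q : ℝ}

theorem memLp_signPow (hpq : p.HolderConjugate q) {w : Ω → ℝ}
    (hw : MemLp w (ENNReal.ofReal p) P) :
    MemLp (fun ω => signPow p (w ω)) (ENNReal.ofReal q) P := by
  have h := hw.norm_rpow_div (ENNReal.ofReal (p - 1))
  rw [toReal_ofReal hpq.sub_one_pos.le, ← ofReal_div_of_pos hpq.sub_one_pos,
    ← hpq.conjugate_eq] at h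
  refine h.of_le ((continuous_signPow hpq.lt).comp_aestronglyMeasurable hw.1)
    (ae_of_all _ fun ω => ?_)
  simpa [abs_signPow hpq.lt.ne'] using le_abs_self _

theorem MeasureTheory.Lp.norm_eq_integral_abs_rpow [hp : Fact (1 ≤ ENNReal.ofReal p)]
    (x : Lp ℝ (ENNReal.ofReal p) P) :
    ‖x‖ = (∫ ω, |x ω| ^ p ∂P) ^ (1 / p) := by
  have hp0 : 0 < p := zero_lt_one.trans_le (one_le_ofReal.1 hp.out)
  rw [Lp.norm_def, (Lp.memLp x).eLpNorm_eq_integral_rpow_norm (by simpa using hp0)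
    ofReal_ne_top, toReal_ofReal (by positivity)]
  simp [Real.norm_eq_abs, toReal_ofReal hp0.le, one_div]

theorem MeasureTheory.Lp.norm_rpow_eq_integral_abs_rpow [hp : Fact (1 ≤ ENNReal.ofReal p)]
    (x : Lp ℝ (ENNReal.ofReal p) P) :
    ‖x‖ ^ p = ∫ ω, |x ω| ^ p ∂P := by
  have hp0 : 0 < p := zero_lt_one.trans_le (one_le_ofReal.1 hp.out)
  rw [Lp.norm_eq_integral_abs_rpow, one_div,
    Real.rpow_inv_rpow (integral_nonneg fun _ => by positivity) hp0.ne']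

theorem abs_integral_mul_le_Lp_mul_Lq (hpq : p.HolderConjugate q) {f g : Ω → ℝ}
    (hf : MemLp f (ENNReal.ofReal p) P) (hg : MemLp g (ENNReal.ofReal q) P) :
    |∫ ω, f ω * g ω ∂P| ≤ (∫ ω, |f ω| ^ p ∂P) ^ (1 / p) * (∫ ω, |g ω| ^ q ∂P) ^ (1 / q) := by
  have h := integral_mul_norm_le_Lp_mul_Lq hpq hf hg
  simp only [Real.norm_eq_abs] at h
  refine abs_integral_le_integral_abs.trans ?_
  simpa only [abs_mul] using h

theorem integral_signPow_add_mul_mul_nonneg (hpq : p.HolderConjugate q) {G F : Ω → ℝ}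
    (hG : MemLp G (ENNReal.ofReal p) P) (hF : MemLp F (ENNReal.ofReal p) P) {t : ℝ} (ht : 0 < t)
    (hmin : ∫ ω, |G ω| ^ p ∂P ≤ ∫ ω, |G ω + t * F ω| ^ p ∂P) :
    0 ≤ ∫ ω, signPow p (G ω + t * F ω) * F ω ∂P := by
  have := hpq.symm.ennrealOfReal
  have hW : MemLp (fun ω => G ω + t * F ω) (ENNReal.ofReal p) P := hG.add (hF.const_mul t)
  have hpow {W : Ω → ℝ} (hW : MemLp W (ENNReal.ofReal p) P) :
      Integrable (fun ω => |W ω| ^ p) P := by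
    simpa [Real.norm_eq_abs, toReal_ofReal hpq.nonneg] using
      hW.integrable_norm_rpow (by simpa using hpq.pos) ofReal_ne_top
  -- the tangent line of `|·|^p` at `G + tF`, evaluated at `G`
  have htangent : ∀ ω, |G ω + t * F ω| ^ p - |G ω| ^ p
      ≤ (p * t) * (signPow p (G ω + t * F ω) * F ω) := fun ω => by
    have h := abs_rpow_add_mul_signPow_le hpq.lt (G ω) (G ω + t * F ω)
    linarith
  have hint : ∫ ω, (|G ω + t * F ω| ^ p - |G ω| ^ p) ∂P
      ≤ ∫ ω, (p * t) * (signPow p (G ω + t * F ω) * F ω) ∂P :=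
    integral_mono ((hpow hW).sub (hpow hG))
      (((memLp_signPow hpq hW).integrable_mul hF).const_mul (p * t)) htangent
  rw [integral_sub (hpow hW) (hpow hG), integral_const_mul] at hint
  exact nonneg_of_mul_nonneg_right (by linarith) (mul_pos hpq.pos ht)

theorem continuousAt_integral_signPow_add_mul_mul (hpq : p.HolderConjugate q) {G F : Ω → ℝ}
    (hG : MemLp G (ENNReal.ofReal p) P) (hF : MemLp F (ENNReal.ofReal p) P) :
    ContinuousAt (fun t : ℝ => ∫ ω, signPow p (G ω + t * F ω) * F ω ∂P) 0 := by
  have := hpq.symm.ennrealOfReal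
  have hbound : MemLp (fun ω => |G ω| + |F ω|) (ENNReal.ofReal p) P := hG.abs.add hF.abs
  refine continuousAt_of_dominated (bound := fun ω => |signPow p (|G ω| + |F ω|) * F ω|)
    (Eventually.of_forall fun t => ?_) ?_ ?_ (ae_of_all _ fun ω => ?_)
  · exact ((memLp_signPow hpq (hG.add (hF.const_mul t))).integrable_mul hF).1
  · filter_upwards [Metric.closedBall_mem_nhds (0 : ℝ) one_pos] with t ht
    refine ae_of_all _ fun ω => ?_
    have ht : |t| ≤ 1 := by simpa using ht
    have hle : |G ω + t * F ω| ≤ |(|G ω| + |F ω|)| := calc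
      |G ω + t * F ω| ≤ |G ω| + |t| * |F ω| := (abs_add_le _ _).trans_eq (by rw [abs_mul])
      _ ≤ |G ω| + |F ω| := by gcongr; exact mul_le_of_le_one_left (abs_nonneg _) ht
      _ ≤ |(|G ω| + |F ω|)| := le_abs_self _
    rw [Real.norm_eq_abs, abs_mul, abs_mul, abs_signPow hpq.lt.ne', abs_signPow hpq.lt.ne']
    gcongr
    exact hpq.sub_one_pos.le
  · exact ((memLp_signPow hpq hbound).integrable_mul hF).abs
  · exact ((continuous_signPow hpq.lt).continuousAt.comp (by fun_prop)).mul continuousAt_const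

theorem integral_signPow_mul_nonneg_of_integral_le (hpq : p.HolderConjugate q) {G F : Ω → ℝ}
    (hG : MemLp G (ENNReal.ofReal p) P) (hF : MemLp F (ENNReal.ofReal p) P)
    (hmin : ∀ t : ℝ, 0 < t → ∫ ω, |G ω| ^ p ∂P ≤ ∫ ω, |G ω + t * F ω| ^ p ∂P) :
    0 ≤ ∫ ω, signPow p (G ω) * F ω ∂P := by
  have h := (continuousAt_integral_signPow_add_mul_mul hpq hG hF).tendsto.mono_left
    (nhdsWithin_le_nhds (s := Ioi 0))
  simp only [zero_mul, add_zero] at h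
  exact ge_of_tendsto h (eventually_nhdsWithin_of_forall fun t ht =>
    integral_signPow_add_mul_mul_nonneg hpq hG hF ht (hmin t ht))

theorem MeasureTheory.Lp.integral_signPow_mul_nonneg_of_norm_le [Fact (1 ≤ ENNReal.ofReal p)]
    (hpq : p.HolderConjugate q) (G F : Lp ℝ (ENNReal.ofReal p) P)
    (hmin : ∀ t : ℝ, 0 < t → ‖G‖ ≤ ‖G + t • F‖) :
    0 ≤ ∫ ω, signPow p (G ω) * F ω ∂P := by
  refine integral_signPow_mul_nonneg_of_integral_le hpq (Lp.memLp G) (Lp.memLp F) fun t ht => ?_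
  have h := Real.rpow_le_rpow (norm_nonneg _) (hmin t ht) hpq.nonneg
  rw [Lp.norm_rpow_eq_integral_abs_rpow, Lp.norm_rpow_eq_integral_abs_rpow] at h
  refine h.trans_eq (integral_congr_ae ?_)
  filter_upwards [Lp.coeFn_add G (t • F), Lp.coeFn_smul t F] with ω h1 h2
  rw [h1, Pi.add_apply, h2, Pi.smul_apply, smul_eq_mul]

theorem MeasureTheory.Lp.integral_abs_signPow_div_rpow_le [Fact (1 ≤ ENNReal.ofReal p)]
    (hpq : p.HolderConjugate q) {G : Lp ℝ (ENNReal.ofReal p) P} (hG : G ≠ 0) {c : ℝ}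
    (hc : ‖G‖ ^ p ≤ c) :
    (∫ ω, |signPow p (G ω) / c| ^ q ∂P) ^ (1 / q) ≤ 1 / ‖G‖ := by
  have hN : 0 < ‖G‖ := norm_pos_iff.2 hG
  have hNp : 0 < ‖G‖ ^ p := Real.rpow_pos_of_pos hN p
  have hc0 : 0 < c := hNp.trans_le hc
  have hpoint : ∀ ω, |signPow p (G ω) / c| ^ q = |G ω| ^ p / c ^ q := fun ω => by
    rw [abs_div, Real.div_rpow (abs_nonneg _) (abs_nonneg _), abs_signPow hpq.lt.ne',
      ← Real.rpow_mul (abs_nonneg _), hpq.sub_one_mul_conj, abs_of_pos hc0]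
  calc (∫ ω, |signPow p (G ω) / c| ^ q ∂P) ^ (1 / q)
      = (‖G‖ ^ p / c ^ q) ^ (1 / q) := by
        simp_rw [hpoint, integral_div, Lp.norm_rpow_eq_integral_abs_rpow]
    _ = ‖G‖ ^ (p - 1) / c := by
        rw [Real.div_rpow hNp.le (by positivity), ← Real.rpow_mul hN.le, one_div,
          Real.rpow_rpow_inv hc0.le hpq.symm.ne_zero, ← div_eq_mul_inv, hpq.div_conj_eq_sub_one]
    _ ≤ ‖G‖ ^ (p - 1) / ‖G‖ ^ p := by gcongr
    _ = 1 / ‖G‖ := by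
        rw [Real.rpow_sub_one hN.ne']
        field_simp

theorem integral_mul_eq_sub_of_add_ae_eq_one {v G F : Ω → ℝ} (hGF : ∀ᵐ ω ∂P, G ω + F ω = 1)
    (hv : Integrable v P) (hvF : Integrable (fun ω => v ω * F ω) P) :
    ∫ ω, v ω * G ω ∂P = ∫ ω, v ω ∂P - ∫ ω, v ω * F ω ∂P := by
  rw [← integral_sub hv hvF]
  refine integral_congr_ae ?_
  filter_upwards [hGF] with ω h
  rw [eq_sub_of_add_eq h]
  ring

end Integral

theorem qoptimal_density_minimal_norm_general
    {Ω : Type*} [MeasurableSpace Ω] (P : Measure Ω) [IsProbabilityMeasure P]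
    (q p : ℝ) (hq : 1 < q) (hp : p = q / (q - 1))
    [Fact (1 ≤ ENNReal.ofReal p)]
    (K : Submodule ℝ (Lp ℝ (ENNReal.ofReal p) P))
    (one : Lp ℝ (ENNReal.ofReal p) P)
    (hone : one = MemLp.toLp (fun _ => (1 : ℝ)) (memLp_const 1))
    (f : Lp ℝ (ENNReal.ofReal p) P) (hf : f ∈ K)
    (hmin : ∀ h ∈ K, ‖one - f‖ ≤ ‖one - h‖)
    (u : Ω → ℝ) (hu : MemLp u (ENNReal.ofReal q) P)
    (hann : ∀ h ∈ K, ∫ ω, u ω * (h : Ω → ℝ) ω ∂P = 0)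
    (hu1 : ∫ ω, u ω ∂P = 1) :
    (∫ ω, u ω * (one - f : Lp ℝ (ENNReal.ofReal p) P) ω ∂P = 1) ∧
    (1 / ‖one - f‖ ≤ (∫ ω, |u ω| ^ q ∂P) ^ (1 / q)) ∧
    ((∫ ω, |(Real.sign ((one - f : Lp ℝ (ENNReal.ofReal p) P) ω) *
          |(one - f : Lp ℝ (ENNReal.ofReal p) P) ω| ^ (p - 1)) /
        (∫ ω', Real.sign ((one - f : Lp ℝ (ENNReal.ofReal p) P) ω') *
          |(one - f : Lp ℝ (ENNReal.ofReal p) P) ω'| ^ (p - 1) ∂P)| ^ q ∂P) ^ (1 / q)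
      ≤ (∫ ω, |u ω| ^ q ∂P) ^ (1 / q)) := by
  have hqp : q.HolderConjugate p := (Real.holderConjugate_iff_eq_conjExponent hq).2 hp
  have hpq : p.HolderConjugate q := hqp.symm
  have := hqp.ennrealOfReal
  set G := one - f
  have hGf : ∀ᵐ ω ∂P, G ω + f ω = 1 := by
    filter_upwards [Lp.coeFn_sub one f, hone ▸ MemLp.coeFn_toLp (memLp_const (1 : ℝ))]
      with ω h1 h2
    simp only [G, h1, Pi.sub_apply, h2, sub_add_cancel]
  have hug : ∫ ω, u ω * G ω ∂P = 1 := by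
    rw [integral_mul_eq_sub_of_add_ae_eq_one hGf (hu.integrable (one_le_ofReal.2 hq.le))
      (hu.integrable_mul (Lp.memLp f)), hu1, hann f hf, sub_zero]
  have hG0 : G ≠ 0 := by
    intro hG
    simp [hG] at hug
  have hholder : 1 / ‖G‖ ≤ (∫ ω, |u ω| ^ q ∂P) ^ (1 / q) := by
    have h := abs_integral_mul_le_Lp_mul_Lq hqp hu (Lp.memLp G)
    rw [hug, abs_one, ← Lp.norm_eq_integral_abs_rpow] at h
    rwa [div_le_iff₀ (norm_pos_iff.2 hG0)]
  have hvar : 0 ≤ ∫ ω, signPow p (G ω) * f ω ∂P :=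
    Lp.integral_signPow_mul_nonneg_of_norm_le hpq G f fun t _ => by
      simpa [G, sub_smul, sub_add] using hmin _ (K.smul_mem (1 - t) hf)
  have hc : ‖G‖ ^ p ≤ ∫ ω, signPow p (G ω) ∂P := by
    have hsG := memLp_signPow hpq (Lp.memLp G)
    have h := integral_mul_eq_sub_of_add_ae_eq_one hGf
      (hsG.integrable (one_le_ofReal.2 hq.le)) (hsG.integrable_mul (Lp.memLp f))
    simp only [signPow_mul_self hpq.ne_zero] at h
    rw [Lp.norm_rpow_eq_integral_abs_rpow]
    linarith
  exact ⟨hug, hholder, (Lp.integral_abs_signPow_div_rpow_le hpq hG0 hc).trans hholder⟩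

/-- For every signed martingale density `u ∈ L^q` one has `E[ug] = 1`, hence by Hölder
`‖u‖_q ≥ 1/‖g‖_p`, and `u* = g*/E[g*]` has minimal `L^q`-norm among such `u`. -/
theorem qoptimal_density_minimal_norm
    {Ω : Type*} [MeasurableSpace Ω] (P : Measure Ω) [IsProbabilityMeasure P]
    (q p : ℝ) (hq : 1 < q) (hp : p = q / (q - 1))
    [Fact (1 ≤ ENNReal.ofReal p)]
    (K : Submodule ℝ (Lp ℝ (ENNReal.ofReal p) P))
    (hK : IsClosed (K : Set (Lp ℝ (ENNReal.ofReal p) P)))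
    (one : Lp ℝ (ENNReal.ofReal p) P)
    (hone : one = MemLp.toLp (fun _ => (1 : ℝ)) (memLp_const 1))
    (h1K : one ∉ K)
    (f : Lp ℝ (ENNReal.ofReal p) P) (hf : f ∈ K)
    (hmin : ∀ h ∈ K, ‖one - f‖ ≤ ‖one - h‖)
    (u : Ω → ℝ) (hu : MemLp u (ENNReal.ofReal q) P)
    (hann : ∀ h ∈ K, ∫ ω, u ω * (h : Ω → ℝ) ω ∂P = 0)
    (hu1 : ∫ ω, u ω ∂P = 1) :
    (∫ ω, u ω * (one - f : Lp ℝ (ENNReal.ofReal p) P) ω ∂P = 1) ∧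
    (1 / ‖one - f‖ ≤ (∫ ω, |u ω| ^ q ∂P) ^ (1 / q)) ∧
    ((∫ ω, |(Real.sign ((one - f : Lp ℝ (ENNReal.ofReal p) P) ω) *
          |(one - f : Lp ℝ (ENNReal.ofReal p) P) ω| ^ (p - 1)) /
        (∫ ω', Real.sign ((one - f : Lp ℝ (ENNReal.ofReal p) P) ω') *
          |(one - f : Lp ℝ (ENNReal.ofReal p) P) ω'| ^ (p - 1) ∂P)| ^ q ∂P) ^ (1 / q)
      ≤ (∫ ω, |u ω| ^ q ∂P) ^ (1 / q)) :=
  qoptimal_density_minimal_norm_general P q p hq hp K one hone f hf hmin u hu hann hu1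
end

section
/- Let q > 1 and suppose M^s ∩ L^q(P) ≠ ∅. If u* = g*/E[g*] is the q-optimal density (minimal L^q-norm element of M^s ∩ L^q(P)), where g* = sgn(1-f)|1-f|^{p-1} and f minimizes ‖1-f‖_p over K̄₀, then E[u · sgn(g*)|g*|^{q-1}] = 1 for every u ∈ M^s ∩ L^q(P). -/
/-!
Write `J = signedRpow (q - 1)`, i.e. `J x = sgn x |x|^{q-1}`. For a second density `u`, the points
`u* + t (u - u*)` are again signed martingale densities for all but countably many `t`, so
differentiating `t ↦ E|u* + t (u - u*)|^q` at `0` (tangent lines of the convex `|·|^q`, dominated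
convergence) gives `E[u J(u*)] = E[u* J(u*)]`. The same argument for `f`, which minimises
`‖1 - k f‖_p` over `k ∈ ℝ`, gives `E[g* f] = 0`. Since `(p - 1)(q - 1) = 1` we have
`J(g*) = 1 - f`, and `J(g*) = J(c) J(u*)` with `c = E[g*]`; hence
`E[u J(g*)] = E[u* (1 - f)] = E[u*] - E[g* f] / c = 1`.
-/

open MeasureTheory ENNReal

/-- `u` is the density of a signed local martingale measure: it is integrable,
annihilates `K₀` and has expectation `1`. -/
def IsSignedMMDensity {Ω : Type*} [MeasurableSpace Ω] (P : Measure Ω)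
    (K₀ : Submodule ℝ (Ω → ℝ)) (u : Ω → ℝ) : Prop :=
  Integrable u P ∧ (∀ h ∈ K₀, ∫ ω, u ω * h ω ∂P = 0) ∧ ∫ ω, u ω ∂P = 1

/-- `f` belongs to the closure of `K₀` in `L^p(P)`. -/
def InLpClosure {Ω : Type*} [MeasurableSpace Ω] (P : Measure Ω)
    (K₀ : Submodule ℝ (Ω → ℝ)) (p : ℝ) (f : Ω → ℝ) : Prop :=
  ∀ ε : ℝ, 0 < ε → ∃ h ∈ K₀,
    eLpNorm (fun ω => f ω - h ω) (ENNReal.ofReal p) P < ENNReal.ofReal ε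

open Filter Topology Set

namespace Real

noncomputable def signedRpow (r x : ℝ) : ℝ := sign x * |x| ^ r

variable {r x : ℝ}

@[simp] lemma signedRpow_zero_right (r : ℝ) : signedRpow r 0 = 0 := by simp [signedRpow]

lemma signedRpow_of_pos (hx : 0 < x) : signedRpow r x = x ^ r := by
  rw [signedRpow, sign_of_pos hx, abs_of_pos hx, one_mul]

lemma signedRpow_of_neg (hx : x < 0) : signedRpow r x = -(-x) ^ r := by
  rw [signedRpow, sign_of_neg hx, abs_of_neg hx, neg_one_mul]

lemma signedRpow_eq_abs_rpow_mul (r x : ℝ) : signedRpow r x = |x| ^ (r - 1) * x := by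
  rcases lt_trichotomy x 0 with hx | rfl | hx
  · rw [signedRpow_of_neg hx, abs_of_neg hx, ← neg_neg (_ * x), ← mul_neg,
      ← rpow_add_one (neg_pos.2 hx).ne', sub_add_cancel]
  · simp
  · rw [signedRpow_of_pos hx, abs_of_pos hx, ← rpow_add_one hx.ne', sub_add_cancel]

lemma signedRpow_eq_max_rpow_sub (hr : r ≠ 0) (x : ℝ) :
    signedRpow r x = max x 0 ^ r - max (-x) 0 ^ r := by
  rcases lt_trichotomy x 0 with hx | rfl | hx
  · rw [signedRpow_of_neg hx, max_eq_right hx.le, max_eq_left (neg_pos.2 hx).le, zero_rpow hr,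
      zero_sub]
  · simp
  · rw [signedRpow_of_pos hx, max_eq_left hx.le, max_eq_right (neg_neg_of_pos hx).le,
      zero_rpow hr, sub_zero]

lemma abs_signedRpow (hr : r ≠ 0) (x : ℝ) : |signedRpow r x| = |x| ^ r := by
  rcases lt_trichotomy x 0 with hx | rfl | hx
  · rw [signedRpow_of_neg hx, abs_neg, abs_of_neg hx, abs_of_nonneg (rpow_nonneg (by linarith) r)]
  · simp [zero_rpow hr]
  · rw [signedRpow_of_pos hx, abs_of_pos hx, abs_of_nonneg (rpow_nonneg hx.le r)]

lemma signedRpow_mul_left {c : ℝ} (hc : 0 < c) (r x : ℝ) :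
    signedRpow r (c * x) = c ^ r * signedRpow r x := by
  rcases lt_trichotomy x 0 with hx | rfl | hx
  · rw [signedRpow_of_neg hx, signedRpow_of_neg (mul_neg_of_pos_of_neg hc hx), ← mul_neg,
      mul_rpow hc.le (neg_pos.2 hx).le, mul_neg]
  · simp
  · rw [signedRpow_of_pos hx, signedRpow_of_pos (mul_pos hc hx), mul_rpow hc.le hx.le]

lemma signedRpow_neg (r x : ℝ) : signedRpow r (-x) = -signedRpow r x := by
  rw [signedRpow, signedRpow, sign_neg, abs_neg, neg_mul]

lemma signedRpow_mul (r c x : ℝ) : signedRpow r (c * x) = signedRpow r c * signedRpow r x := by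
  rcases lt_trichotomy c 0 with hc | rfl | hc
  · rw [← neg_neg c, neg_mul, signedRpow_neg, signedRpow_neg, signedRpow_mul_left (neg_pos.2 hc),
      signedRpow_of_pos (neg_pos.2 hc), neg_mul]
  · simp
  · rw [signedRpow_mul_left hc, signedRpow_of_pos hc]

lemma signedRpow_signedRpow (r s x : ℝ) :
    signedRpow s (signedRpow r x) = signedRpow (r * s) x := by
  rcases lt_trichotomy x 0 with hx | rfl | hx
  · have hx' : 0 < -x := neg_pos.2 hx
    rw [signedRpow_of_neg hx, signedRpow_of_neg (by simpa using rpow_pos_of_pos hx' r),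
      signedRpow_of_neg hx, neg_neg, ← rpow_mul hx'.le]
  · simp
  · rw [signedRpow_of_pos hx, signedRpow_of_pos (rpow_pos_of_pos hx r),
      signedRpow_of_pos hx, ← rpow_mul hx.le]

@[simp] lemma signedRpow_one (x : ℝ) : signedRpow 1 x = x := by
  simp [signedRpow_eq_abs_rpow_mul]

lemma continuous_signedRpow (hr : 0 < r) : Continuous (signedRpow r) := by
  rw [funext (signedRpow_eq_max_rpow_sub hr.ne')]
  exact ((continuous_id.max continuous_const).rpow_const fun _ => .inr hr.le).sub
    ((continuous_neg.max continuous_const).rpow_const fun _ => .inr hr.le)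

lemma convexOn_abs_rpow (hr : 1 ≤ r) : ConvexOn ℝ univ fun x : ℝ => |x| ^ r := by
  have himage : (fun x : ℝ => |x|) '' univ = Ici 0 := by
    ext y
    exact ⟨fun ⟨x, _, hx⟩ => hx ▸ abs_nonneg x,
      fun hy => ⟨y, mem_univ y, abs_of_nonneg hy⟩⟩
  refine ConvexOn.comp (g := fun x : ℝ => x ^ r) (himage ▸ convexOn_rpow hr)
    (convexOn_univ_norm (E := ℝ)) (himage ▸ ?_)
  exact fun a ha b _ hab => rpow_le_rpow ha hab (by linarith)

lemma abs_rpow_add_mul_signedRpow_le (hr : 1 < r) (x y : ℝ) :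
    |x| ^ r + r * signedRpow (r - 1) x * (y - x) ≤ |y| ^ r := by
  have hconv := convexOn_abs_rpow hr.le
  have hderiv : HasDerivAt (fun y => |y| ^ r) (r * signedRpow (r - 1) x) x := by
    convert hasDerivAt_abs_rpow x hr using 1
    rw [signedRpow_eq_abs_rpow_mul, mul_assoc]
    ring_nf
  rcases lt_trichotomy x y with hxy | rfl | hxy
  · have := hconv.le_slope_of_hasDerivAt (mem_univ _) (mem_univ _) hxy hderiv
    rw [slope_def_field, le_div_iff₀ (sub_pos.2 hxy)] at this
    linarith
  · simp
  · have := hconv.slope_le_of_hasDerivAt (mem_univ _) (mem_univ _) hxy hderiv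
    rw [slope_def_field, div_le_iff₀ (sub_pos.2 hxy)] at this
    linarith

end Real

open Real

section DenselyOrdered

variable {α : Type*} [TopologicalSpace α] [LinearOrder α] [OrderTopology α] [DenselyOrdered α]
  {D : Set α}

lemma Dense.frequently_nhdsGT [NoMaxOrder α] (hD : Dense D) (x : α) :
    ∃ᶠ t in 𝓝[>] x, t ∈ D := by
  refine frequently_iff.2 fun hU => ?_
  obtain ⟨u, hxu, hsub⟩ := mem_nhdsGT_iff_exists_Ioo_subset.1 hU
  obtain ⟨t, htD, ht⟩ := hD.exists_between hxu
  exact ⟨t, hsub ht, htD⟩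

lemma Dense.frequently_nhdsLT [NoMinOrder α] (hD : Dense D) (x : α) :
    ∃ᶠ t in 𝓝[<] x, t ∈ D := by
  refine frequently_iff.2 fun hU => ?_
  obtain ⟨l, hlx, hsub⟩ := mem_nhdsLT_iff_exists_Ioo_subset.1 hU
  obtain ⟨t, htD, ht⟩ := hD.exists_between hlx
  exact ⟨t, hsub ht, htD⟩

end DenselyOrdered

namespace MeasureTheory

variable {Ω : Type*} [MeasurableSpace Ω] {P : Measure Ω} {r s t : ℝ} {a b v w h : Ω → ℝ}

lemma MemLp.signedRpow_sub_one (hrs : r.HolderConjugate s)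
    (hv : MemLp v (.ofReal r) P) : MemLp (fun ω => signedRpow (r - 1) (v ω)) (.ofReal s) P := by
  have hexp : ENNReal.ofReal r / ENNReal.ofReal (r - 1) = ENNReal.ofReal s := by
    rw [← ENNReal.ofReal_div_of_pos hrs.sub_one_pos, ← hrs.conjugate_eq]
  refine (hexp ▸ hv.norm_rpow_div (.ofReal (r - 1))).congr_norm
    ((continuous_signedRpow hrs.sub_one_pos).comp_aestronglyMeasurable hv.1)
    (ae_of_all _ fun ω => ?_)
  simp only [toReal_ofReal hrs.sub_one_pos.le, norm_eq_abs, abs_signedRpow hrs.sub_one_ne_zero,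
    abs_of_nonneg (rpow_nonneg (abs_nonneg _) _)]

lemma MemLp.integrable_mul_of_holderConjugate (hrs : r.HolderConjugate s)
    (ha : MemLp a (.ofReal r) P) (hb : MemLp b (.ofReal s) P) :
    Integrable (fun ω => a ω * b ω) P :=
  haveI := hrs.ennrealOfReal
  ha.integrable_mul hb

lemma MemLp.integrable_abs_rpow (hr : 0 < r) (ha : MemLp a (.ofReal r) P) :
    Integrable (fun ω => |a ω| ^ r) P := by
  simpa [toReal_ofReal hr.le] using ha.integrable_norm_rpow (by simpa using hr) ofReal_ne_top

lemma integral_abs_rpow_le_of_eLpNorm_le (hr : 0 < r)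
    (ha : MemLp a (.ofReal r) P) (hb : MemLp b (.ofReal r) P)
    (hle : eLpNorm a (.ofReal r) P ≤ eLpNorm b (.ofReal r) P) :
    ∫ ω, |a ω| ^ r ∂P ≤ ∫ ω, |b ω| ^ r ∂P := by
  have hr0 : ENNReal.ofReal r ≠ 0 := by simpa using hr
  rw [ha.eLpNorm_eq_integral_rpow_norm hr0 ofReal_ne_top,
    hb.eLpNorm_eq_integral_rpow_norm hr0 ofReal_ne_top,
    ENNReal.ofReal_le_ofReal_iff (by positivity), toReal_ofReal hr.le] at hle
  simp only [norm_eq_abs] at hle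
  have := rpow_le_rpow (by positivity) hle hr.le
  rwa [← rpow_mul (integral_nonneg fun _ => by positivity),
    ← rpow_mul (integral_nonneg fun _ => by positivity), inv_mul_cancel₀ hr.ne', Real.rpow_one,
    Real.rpow_one] at this

lemma integral_signedRpow_mul_sub_nonneg (hr : 1 < r) (ha : MemLp a (.ofReal r) P)
    (hb : MemLp b (.ofReal r) P) (hle : eLpNorm a (.ofReal r) P ≤ eLpNorm b (.ofReal r) P) :
    0 ≤ ∫ ω, signedRpow (r - 1) (b ω) * (b ω - a ω) ∂P := by
  have hr0 : 0 < r := by linarith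
  have hint : Integrable (fun ω => signedRpow (r - 1) (b ω) * (b ω - a ω)) P :=
    (hb.signedRpow_sub_one (.conjExponent hr)).integrable_mul_of_holderConjugate
      (HolderConjugate.conjExponent hr).symm (hb.sub ha)
  have hmono : ∫ ω, |b ω| ^ r - |a ω| ^ r ∂P ≤
      ∫ ω, r * (signedRpow (r - 1) (b ω) * (b ω - a ω)) ∂P :=
    integral_mono ((hb.integrable_abs_rpow hr0).sub (ha.integrable_abs_rpow hr0))
      (hint.const_mul r) fun ω => by
        linarith [abs_rpow_add_mul_signedRpow_le hr (b ω) (a ω)]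
  rw [integral_sub (hb.integrable_abs_rpow hr0) (ha.integrable_abs_rpow hr0),
    integral_const_mul] at hmono
  exact nonneg_of_mul_nonneg_right
    (by linarith [integral_abs_rpow_le_of_eLpNorm_le hr0 ha hb hle]) hr0

lemma continuousAt_integral_signedRpow_add_mul (hr : 1 < r)
    (ha : MemLp a (.ofReal r) P) (hb : MemLp b (.ofReal r) P) :
    ContinuousAt (fun t => ∫ ω, signedRpow (r - 1) (a ω + t * b ω) * b ω ∂P) 0 := by
  have hr1 : 0 < r - 1 := by linarith
  have hcont := continuous_signedRpow hr1
  have hbound : Integrable (fun ω => (|a ω| + |b ω|) ^ (r - 1) * |b ω|) P := by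
    refine ((ha.abs.add hb.abs).signedRpow_sub_one (.conjExponent hr)
      |>.integrable_mul_of_holderConjugate (HolderConjugate.conjExponent hr).symm hb).norm.congr
      (ae_of_all _ fun ω => ?_)
    simp only [norm_mul, norm_eq_abs, abs_signedRpow hr1.ne', Pi.add_apply, Pi.abs_apply,
      abs_of_nonneg (add_nonneg (abs_nonneg (a ω)) (abs_nonneg (b ω)))]
  refine continuousAt_of_dominated (Eventually.of_forall fun t => ?_) ?_ hbound
    (ae_of_all _ fun ω => by fun_prop)
  · exact (hcont.comp_aestronglyMeasurable (ha.1.add (hb.1.const_mul t))).mul hb.1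
  · filter_upwards [Metric.ball_mem_nhds (0 : ℝ) one_pos] with t ht
    refine ae_of_all _ fun ω => ?_
    rw [norm_mul, norm_eq_abs, norm_eq_abs, abs_signedRpow hr1.ne']
    gcongr
    calc |a ω + t * b ω| ≤ |a ω| + |t| * |b ω| := (abs_add_le _ _).trans_eq (by rw [abs_mul])
      _ ≤ |a ω| + |b ω| := by
        have : |t| < 1 := by simpa using ht
        gcongr; nlinarith [abs_nonneg (b ω)]

lemma integral_signedRpow_mul_eq_zero_of_countable (hr : 1 < r)
    (ha : MemLp a (.ofReal r) P) (hb : MemLp b (.ofReal r) P) {N : Set ℝ} (hN : N.Countable)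
    (hmin : ∀ t ∉ N,
      eLpNorm a (.ofReal r) P ≤ eLpNorm (fun ω => a ω + t * b ω) (.ofReal r) P) :
    ∫ ω, signedRpow (r - 1) (a ω) * b ω ∂P = 0 := by
  set φ := fun t => ∫ ω, signedRpow (r - 1) (a ω + t * b ω) * b ω ∂P
  have hφ : ContinuousAt φ 0 := continuousAt_integral_signedRpow_add_mul hr ha hb
  have hsign : ∀ t ∉ N, 0 ≤ t * φ t := fun t ht => by
    have := integral_signedRpow_mul_sub_nonneg (b := fun ω => a ω + t * b ω) hr ha
      (ha.add (hb.const_mul t)) (hmin t ht)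
    simpa only [add_sub_cancel_left, mul_left_comm _ t, integral_const_mul] using this
  have hdense : Dense Nᶜ := hN.dense_compl ℝ
  have hpos : φ 0 ∈ Ici 0 := isClosed_Ici.mem_of_frequently_of_tendsto
    (((hdense.frequently_nhdsGT 0).and_eventually self_mem_nhdsWithin).mono
      fun t ⟨htN, ht⟩ => nonneg_of_mul_nonneg_right (hsign t htN) ht)
    (hφ.tendsto.mono_left nhdsWithin_le_nhds)
  have hneg : φ 0 ∈ Iic 0 := isClosed_Iic.mem_of_frequently_of_tendsto
    (((hdense.frequently_nhdsLT 0).and_eventually self_mem_nhdsWithin).mono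
      fun t ⟨htN, ht⟩ => nonpos_of_mul_nonneg_right (hsign t htN) ht)
    (hφ.tendsto.mono_left nhdsWithin_le_nhds)
  simpa [φ] using le_antisymm (mem_Iic.1 hneg) (mem_Ici.1 hpos)

-- Elements of `K₀` need not be measurable, so `∫ v * h = 0` may be a junk value. Off the null set,
-- `v * h = v / (v + t (w - v)) * ((v + t (w - v)) * h)`, so measurability passes to `v * h`.
lemma aestronglyMeasurable_mul_of_add_mul_sub (hv : AEMeasurable v P) (hw : AEMeasurable w P)
    (hnull : P {ω | v ω + t * (w ω - v ω) = 0 ∧ v ω ≠ 0} = 0)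
    (hψh : AEStronglyMeasurable (fun ω => (v ω + t * (w ω - v ω)) * h ω) P) :
    AEStronglyMeasurable (fun ω => v ω * h ω) P := by
  have hratio : AEStronglyMeasurable (fun ω => v ω / (v ω + t * (w ω - v ω))) P :=
    (hv.div (hv.add ((hw.sub hv).const_mul t))).aestronglyMeasurable
  refine (hratio.mul hψh).congr ?_
  filter_upwards [measure_eq_zero_iff_ae_notMem.1 hnull] with ω hω
  by_cases hψ : v ω + t * (w ω - v ω) = 0
  · have hv0 : v ω = 0 := not_not.1 fun hv0 => hω ⟨hψ, hv0⟩
    simp [hv0]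
  · simp only [Pi.mul_apply]
    field_simp

lemma integral_add_mul_sub_mul_eq_zero (hv : Integrable v P) (hw : Integrable w P)
    (hh : ∃ C, ∀ᵐ ω ∂P, |h ω| ≤ C) (hvh : ∫ ω, v ω * h ω ∂P = 0)
    (hwh : ∫ ω, w ω * h ω ∂P = 0)
    (ht : t ≠ 0) (hnull : P {ω | v ω + t * (w ω - v ω) = 0 ∧ v ω ≠ 0} = 0) :
    ∫ ω, (v ω + t * (w ω - v ω)) * h ω ∂P = 0 := by
  by_cases hψh : Integrable (fun ω => (v ω + t * (w ω - v ω)) * h ω) P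
  swap
  · exact integral_undef hψh
  obtain ⟨C, hC⟩ := hh
  have hvh_int : Integrable (fun ω => v ω * h ω) P :=
    (hv.norm.mul_const C).mono'
      (aestronglyMeasurable_mul_of_add_mul_sub hv.1.aemeasurable hw.1.aemeasurable hnull hψh.1)
      (hC.mono fun ω hω => by
        rw [norm_mul, norm_eq_abs]; exact mul_le_mul_of_nonneg_left hω (abs_nonneg _))
  have hwh_int : Integrable (fun ω => w ω * h ω) P := by
    have hw_eq : (fun ω => w ω * h ω) = fun ω =>
        t⁻¹ * ((v ω + t * (w ω - v ω)) * h ω) - (t⁻¹ - 1) * (v ω * h ω) := by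
      funext ω; field_simp; ring
    rw [hw_eq]
    exact (hψh.const_mul _).sub (hvh_int.const_mul _)
  have hψ_eq : (fun ω => (v ω + t * (w ω - v ω)) * h ω) = fun ω =>
      (1 - t) * (v ω * h ω) + t * (w ω * h ω) := by
    funext ω; ring
  rw [hψ_eq, integral_add (hvh_int.const_mul _) (hwh_int.const_mul _), integral_const_mul,
    integral_const_mul, hvh, hwh, mul_zero, mul_zero, add_zero]

lemma countable_setOf_measure_add_mul_sub_eq_zero_pos [SFinite P] (hv : AEMeasurable v P)
    (hw : AEMeasurable w P) :
    {t : ℝ | 0 < P {ω | v ω + t * (w ω - v ω) = 0 ∧ v ω ≠ 0}}.Countable := by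
  refine Measure.countable_meas_pos_of_disjoint_iUnion₀ (fun t => ?_) fun t₁ t₂ hne => ?_
  · exact ((hv.add ((hw.sub hv).const_mul t)).nullMeasurableSet_preimage
      (measurableSet_singleton 0)).inter (hv.nullMeasurableSet_preimage
      (measurableSet_singleton 0)).compl
  · refine Disjoint.aedisjoint (Set.disjoint_left.2 ?_)
    rintro ω ⟨h₁, hv0⟩ ⟨h₂, -⟩
    have : (t₁ - t₂) * (w ω - v ω) = 0 := by linarith
    rcases mul_eq_zero.1 this with h | h
    · exact hne (sub_eq_zero.1 h)
    · exact hv0 (by simpa [h] using h₁)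

end MeasureTheory

section Optimality

variable {Ω : Type*} [MeasurableSpace Ω] {P : Measure Ω} {K₀ : Submodule ℝ (Ω → ℝ)}
  {v w : Ω → ℝ}

lemma IsSignedMMDensity.countable_setOf_not_add_mul_sub [SFinite P]
    (hbdd : ∀ h ∈ K₀, ∃ C : ℝ, ∀ᵐ ω ∂P, |h ω| ≤ C)
    (hv : IsSignedMMDensity P K₀ v) (hw : IsSignedMMDensity P K₀ w) :
    {t : ℝ | ¬IsSignedMMDensity P K₀ fun ω => v ω + t * (w ω - v ω)}.Countable := by
  obtain ⟨hv_int, hvK, hv_mean⟩ := hv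
  obtain ⟨hw_int, hwK, hw_mean⟩ := hw
  refine ((countable_setOf_measure_add_mul_sub_eq_zero_pos hv_int.1.aemeasurable
    hw_int.1.aemeasurable).insert 0).mono fun t ht => ?_
  by_contra hgood
  rw [mem_insert_iff, not_or, mem_ofPred_eq, not_lt, nonpos_iff_eq_zero] at hgood
  have hcomb : Integrable (fun ω => t * (w ω - v ω)) P := (hw_int.sub hv_int).const_mul t
  refine ht ⟨hv_int.add hcomb, fun h hK =>
    integral_add_mul_sub_mul_eq_zero hv_int hw_int (hbdd h hK) (hvK h hK) (hwK h hK) hgood.1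
      hgood.2, ?_⟩
  change ∫ ω, v ω + t * (w ω - v ω) ∂P = 1
  rw [integral_add hv_int hcomb, integral_const_mul, integral_sub hw_int hv_int, hv_mean, hw_mean]
  ring

lemma InLpClosure.const_mul {p : ℝ} {f : Ω → ℝ} (hf : InLpClosure P K₀ p f) (k : ℝ) :
    InLpClosure P K₀ p fun ω => k * f ω := by
  intro ε hε
  have hk : 0 < |k| + 1 := by positivity
  obtain ⟨h, hK, hh⟩ := hf (ε / (|k| + 1)) (by positivity)
  refine ⟨k • h, K₀.smul_mem k hK, ?_⟩
  calc eLpNorm (fun ω => k * f ω - (k • h) ω) (.ofReal p) P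
      = ‖k‖ₑ * eLpNorm (fun ω => f ω - h ω) (.ofReal p) P := by
        rw [← eLpNorm_const_smul]
        congr 1
        ext ω
        simp [mul_sub]
    _ ≤ .ofReal (|k| + 1) * eLpNorm (fun ω => f ω - h ω) (.ofReal p) P := by
        rw [Real.enorm_eq_ofReal_abs]
        gcongr
        linarith
    _ < .ofReal (|k| + 1) * .ofReal (ε / (|k| + 1)) :=
        ENNReal.mul_lt_mul_right (by simpa using hk) ofReal_ne_top hh
    _ = .ofReal ε := by rw [← ofReal_mul hk.le, mul_div_cancel₀ _ hk.ne']

lemma inLpClosure_zero (p : ℝ) : InLpClosure P K₀ p 0 :=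
  fun ε hε => ⟨0, K₀.zero_mem, by simpa using hε⟩

lemma memLp_of_forall_eLpNorm_one_sub_le [IsFiniteMeasure P] {p : ℝ} {f : Ω → ℝ}
    (hf : AEStronglyMeasurable f P)
    (hfmin : ∀ f' : Ω → ℝ, InLpClosure P K₀ p f' →
      eLpNorm (fun ω => 1 - f ω) (.ofReal p) P ≤ eLpNorm (fun ω => 1 - f' ω) (.ofReal p) P) :
    MemLp f (.ofReal p) P := by
  have hF : MemLp (fun ω => 1 - f ω) (.ofReal p) P :=
    ⟨aestronglyMeasurable_const.sub hf, (hfmin 0 (inLpClosure_zero p)).trans_lt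
      (by simpa using (memLp_const (1 : ℝ)).eLpNorm_lt_top)⟩
  convert (memLp_const 1).sub hF using 1
  ext ω
  simp

lemma integral_signedRpow_one_sub_mul_eq_zero [IsFiniteMeasure P] {p : ℝ} (hp : 1 < p)
    {f : Ω → ℝ} (hf : MemLp f (.ofReal p) P) (hfcl : InLpClosure P K₀ p f)
    (hfmin : ∀ f' : Ω → ℝ, InLpClosure P K₀ p f' →
      eLpNorm (fun ω => 1 - f ω) (.ofReal p) P ≤ eLpNorm (fun ω => 1 - f' ω) (.ofReal p) P) :
    ∫ ω, signedRpow (p - 1) (1 - f ω) * f ω ∂P = 0 :=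
  integral_signedRpow_mul_eq_zero_of_countable hp ((memLp_const 1).sub hf) hf countable_empty
    fun t _ => by
      convert hfmin _ (hfcl.const_mul (1 - t)) using 2
      ext ω
      ring

lemma integral_mul_signedRpow_eq_of_forall_eLpNorm_le [SFinite P] {q : ℝ} (hq : 1 < q)
    (hbdd : ∀ h ∈ K₀, ∃ C : ℝ, ∀ᵐ ω ∂P, |h ω| ≤ C) {ustar u : Ω → ℝ}
    (hustar : IsSignedMMDensity P K₀ ustar) (hustar_q : MemLp ustar (.ofReal q) P)
    (hmin : ∀ u : Ω → ℝ, IsSignedMMDensity P K₀ u → MemLp u (.ofReal q) P →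
      eLpNorm ustar (.ofReal q) P ≤ eLpNorm u (.ofReal q) P)
    (hu : IsSignedMMDensity P K₀ u) (hu_q : MemLp u (.ofReal q) P) :
    ∫ ω, u ω * signedRpow (q - 1) (ustar ω) ∂P =
      ∫ ω, ustar ω * signedRpow (q - 1) (ustar ω) ∂P := by
  have hqq' := HolderConjugate.conjExponent hq
  have hJ := hustar_q.signedRpow_sub_one hqq'
  have hfirst_order : ∫ ω, signedRpow (q - 1) (ustar ω) * (u ω - ustar ω) ∂P = 0 :=
    integral_signedRpow_mul_eq_zero_of_countable (b := fun ω => u ω - ustar ω) hq hustar_q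
      (hu_q.sub hustar_q) (hustar.countable_setOf_not_add_mul_sub hbdd hu) fun t ht =>
        hmin _ (not_not.1 ht) (hustar_q.add ((hu_q.sub hustar_q).const_mul t))
  simp_rw [mul_sub, integral_sub (hJ.integrable_mul_of_holderConjugate hqq'.symm hu_q)
    (hJ.integrable_mul_of_holderConjugate hqq'.symm hustar_q), sub_eq_zero,
    mul_comm (signedRpow _ _)] at hfirst_order
  exact hfirst_order

end Optimality

/-- Necessity: if `u* = g*/E[g*]` is the `q`-optimal signed martingale density, where
`g* = sgn(1-f)|1-f|^{p-1}` and `f` minimizes `‖1-·‖_p` over the closure of `K₀`, then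
`E[u ⬝ sgn(g*)|g*|^{q-1}] = 1` for every signed martingale density `u ∈ L^q`. -/
theorem qoptimal_necessary_condition
    {Ω : Type*} [MeasurableSpace Ω] (P : Measure Ω) [IsProbabilityMeasure P]
    (q p : ℝ) (hq : 1 < q) (hp : p = q / (q - 1))
    (K₀ : Submodule ℝ (Ω → ℝ))
    (hbdd : ∀ h ∈ K₀, ∃ C : ℝ, ∀ᵐ ω ∂P, |h ω| ≤ C)
    (f : Ω → ℝ) (hfcl : InLpClosure P K₀ p f)
    (hfmin : ∀ f' : Ω → ℝ, InLpClosure P K₀ p f' →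
      eLpNorm (fun ω => 1 - f ω) (ENNReal.ofReal p) P ≤
        eLpNorm (fun ω => 1 - f' ω) (ENNReal.ofReal p) P)
    (gstar : Ω → ℝ)
    (hgstar : gstar = fun ω => Real.sign (1 - f ω) * |1 - f ω| ^ (p - 1))
    (ustar : Ω → ℝ)
    (hustar : ustar = fun ω => gstar ω / ∫ ω', gstar ω' ∂P)
    (hopt : IsSignedMMDensity P K₀ ustar ∧ MemLp ustar (ENNReal.ofReal q) P ∧
      ∀ u : Ω → ℝ, IsSignedMMDensity P K₀ u → MemLp u (ENNReal.ofReal q) P →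
        eLpNorm ustar (ENNReal.ofReal q) P ≤ eLpNorm u (ENNReal.ofReal q) P) :
    ∀ u : Ω → ℝ, IsSignedMMDensity P K₀ u → MemLp u (ENNReal.ofReal q) P →
      ∫ ω, u ω * (Real.sign (gstar ω) * |gstar ω| ^ (q - 1)) ∂P = 1 := by
  obtain ⟨hdens, hdens_q, hmin⟩ := hopt
  intro u hu hu_q
  change ∫ ω, u ω * signedRpow (q - 1) (gstar ω) ∂P = 1
  have hg : gstar = fun ω => signedRpow (p - 1) (1 - f ω) := hgstar
  have hqp : q.HolderConjugate p := (holderConjugate_iff_eq_conjExponent hq).2 hp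
  set c := ∫ ω, gstar ω ∂P
  have hg_c : gstar = fun ω => c * ustar ω := by
    have hc : c ≠ 0 := fun hc => by simpa [hustar, hc] using hdens.2.2
    rw [hustar]; ext ω; field_simp
  have hg_inv : ∀ ω, signedRpow (q - 1) (gstar ω) = 1 - f ω := fun ω => by
    rw [hg, signedRpow_signedRpow,
      show (p - 1) * (q - 1) = 1 by linarith [hqp.mul_eq_add], signedRpow_one]
  have hf_p : MemLp f (.ofReal p) P := by
    refine memLp_of_forall_eLpNorm_one_sub_le ?_ hfmin
    have hf_eq : f = fun ω => 1 - signedRpow (q - 1) (gstar ω) := by ext ω; rw [hg_inv]; ring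
    simp_rw [hf_eq, hg_c]
    exact aestronglyMeasurable_const.sub <| (continuous_signedRpow hqp.sub_one_pos)
      |>.comp_aestronglyMeasurable (hdens_q.1.const_mul c)
  have hustar_f : ∫ ω, ustar ω * f ω ∂P = 0 := by
    simp_rw [hustar, div_mul_eq_mul_div, integral_div, hg,
      integral_signedRpow_one_sub_mul_eq_zero hqp.symm.lt hf_p hfcl hfmin, zero_div]
  calc ∫ ω, u ω * signedRpow (q - 1) (gstar ω) ∂P
      = signedRpow (q - 1) c * ∫ ω, u ω * signedRpow (q - 1) (ustar ω) ∂P := by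
        simp_rw [hg_c, signedRpow_mul, mul_left_comm (u _), integral_const_mul]
    _ = ∫ ω, ustar ω * (1 - f ω) ∂P := by
        rw [integral_mul_signedRpow_eq_of_forall_eLpNorm_le hq hbdd hdens hdens_q hmin hu hu_q,
          ← integral_const_mul]
        simp_rw [← hg_inv, hg_c, signedRpow_mul, mul_left_comm (ustar _)]
    _ = 1 := by
        simp_rw [mul_one_sub]
        rw [integral_sub hdens.1 (hdens_q.integrable_mul_of_holderConjugate hqp hf_p), hdens.2.2,
          hustar_f, sub_zero]
end

section
/- Let q > 1 and g* ∈ L^q(P) with u* := g*/E[g*] ∈ M^s ∩ L^q(P) (in particular E[g*] ≠ 0). If E[u · sgn(g*)|g*|^{q-1}] = 1 for every u ∈ M^s ∩ L^q(P), then u* is the q-optimal measure density, i.e. ‖u*‖_q ≤ ‖u‖_q for all u ∈ M^s ∩ L^q(P). -/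
open MeasureTheory ENNReal

/-!
Put `f := sgn(g*)|g*|^{q-1}` and `N := ‖g*‖_q`, so that `g* f = |g*|^q` and `‖f‖_p = N^{q-1}`.
Testing the hypothesis on `u*` itself gives `E[|g*|^q] = E[g*]`, i.e. `N^q = E[g*] > 0`, whence
`‖u*‖_q = N / N^q = (N^{q-1})⁻¹`. For any other admissible `u`, Hölder's inequality turns
`E[u f] = 1` into `1 ≤ ‖u‖_q ‖f‖_p`, that is `(N^{q-1})⁻¹ ≤ ‖u‖_q`.
-/

namespace Real

lemma measurable_sign : Measurable Real.sign :=
  Measurable.ite measurableSet_Iio measurable_const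
    (Measurable.ite measurableSet_Ioi measurable_const measurable_const)

lemma mul_sign_self (x : ℝ) : x * sign x = |x| := by
  rcases lt_trichotomy x 0 with h | rfl | h
  · rw [sign_of_neg h, abs_of_neg h, mul_neg_one]
  · rw [sign_zero, mul_zero, abs_zero]
  · rw [sign_of_pos h, abs_of_pos h, mul_one]

lemma mul_sign_mul_abs_rpow_sub_one (x : ℝ) {q : ℝ} (hq : q ≠ 0) :
    x * (sign x * |x| ^ (q - 1)) = |x| ^ q := by
  rw [← mul_assoc, mul_sign_self, ← rpow_one_add' (abs_nonneg x) (by simpa), add_sub_cancel]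

lemma abs_sign_mul_abs_rpow (x : ℝ) {r : ℝ} (hr : r ≠ 0) :
    |sign x * |x| ^ r| = |x| ^ r := by
  rcases eq_or_ne x 0 with rfl | hx
  · simp [zero_rpow hr]
  · rcases sign_apply_eq_of_ne_zero x hx with h | h <;>
      simp [h, abs_of_nonneg (rpow_nonneg (abs_nonneg x) r)]

end Real

namespace MeasureTheory

variable {α : Type*} [MeasurableSpace α] {μ : Measure α}

lemma eLpNorm_sign_mul_abs_rpow (g : α → ℝ) (p : ℝ≥0∞) {r : ℝ} (hr : 0 < r) :
    eLpNorm (fun x => Real.sign (g x) * |g x| ^ r) p μ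
      = eLpNorm g (p * ENNReal.ofReal r) μ ^ r := by
  rw [← eLpNorm_norm_rpow g hr]
  refine eLpNorm_congr_norm_ae (ae_of_all _ fun x => ?_)
  simp only [Real.norm_eq_abs, Real.abs_sign_mul_abs_rpow _ hr.ne',
    abs_of_nonneg (Real.rpow_nonneg (abs_nonneg (g x)) r)]

lemma MemLp.eLpNorm_rpow_eq_ofReal_integral {g : α → ℝ} {q : ℝ} (hq : 0 < q)
    (hg : MemLp g (ENNReal.ofReal q) μ) :
    eLpNorm g (ENNReal.ofReal q) μ ^ q = ENNReal.ofReal (∫ x, |g x| ^ q ∂μ) := by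
  rw [hg.eLpNorm_eq_integral_rpow_norm (by simpa) ofReal_ne_top, toReal_ofReal hq.le,
    ofReal_rpow_of_nonneg (by positivity) hq.le, ← Real.rpow_mul (by positivity),
    inv_mul_cancel₀ hq.ne', Real.rpow_one]
  rfl

lemma eLpNorm_div_eq_inv_rpow_sub_one {g : α → ℝ} {p : ℝ≥0∞} {r m : ℝ} (hr : 0 < r)
    (hm : 0 < m) (hg : eLpNorm g p μ ≠ ⊤) (hgm : eLpNorm g p μ ^ r = ENNReal.ofReal m) :
    eLpNorm (fun x => g x / m) p μ = (eLpNorm g p μ ^ (r - 1))⁻¹ := by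
  have hg0 : eLpNorm g p μ ≠ 0 := fun h0 => by
    rw [h0, ENNReal.zero_rpow_of_pos hr] at hgm
    exact (ENNReal.ofReal_pos.2 hm).ne hgm
  have hg_smul : (fun x => g x / m) = m⁻¹ • g := by
    ext x; simp [div_eq_inv_mul]
  rw [hg_smul, eLpNorm_const_smul, enorm_inv hm.ne', Real.enorm_of_nonneg hm.le, ← hgm,
    ENNReal.rpow_sub _ _ hg0 hg, ENNReal.rpow_one, ENNReal.inv_div (.inl hg) (.inl hg0),
    ENNReal.div_eq_inv_mul]

lemma inv_eLpNorm_le_of_integral_mul_eq_one {p q : ℝ≥0∞} [p.HolderConjugate q] {u f : α → ℝ}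
    (hu : AEStronglyMeasurable u μ) (hf : AEStronglyMeasurable f μ)
    (h : ∫ x, u x * f x ∂μ = 1) :
    (eLpNorm f q μ)⁻¹ ≤ eLpNorm u p μ := by
  have holder : 1 ≤ eLpNorm u p μ * eLpNorm f q μ :=
    calc (1 : ℝ≥0∞) = ‖∫ x, u x * f x ∂μ‖ₑ := by simp [h]
      _ ≤ eLpNorm (u • f) 1 μ := by
        rw [eLpNorm_one_eq_lintegral_enorm]; exact enorm_integral_le_lintegral_enorm _
      _ ≤ eLpNorm u p μ * eLpNorm f q μ := eLpNorm_smul_le_mul_eLpNorm hf hu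
  rw [ENNReal.inv_le_iff_le_mul (fun _ h0 => by simp [h0] at holder)
    (fun _ h0 => by simp [h0] at holder), mul_comm]
  exact holder

end MeasureTheory

theorem qoptimal_sufficient_condition_general
    {Ω : Type*} [MeasurableSpace Ω] (P : Measure Ω)
    (q p : ℝ) (hq : 1 < q) (hp : p = q / (q - 1))
    (K₀ : Submodule ℝ (Ω → ℝ))
    (gstar : Ω → ℝ) (hgq : MemLp gstar (ENNReal.ofReal q) P)
    (hEne : ∫ ω, gstar ω ∂P ≠ 0)
    (ustar : Ω → ℝ)
    (hustar : ustar = fun ω => gstar ω / ∫ ω', gstar ω' ∂P)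
    (hustarMs : IsSignedMMDensity P K₀ ustar)
    (hustarLq : MemLp ustar (ENNReal.ofReal q) P)
    (hcond : ∀ u : Ω → ℝ, IsSignedMMDensity P K₀ u → MemLp u (ENNReal.ofReal q) P →
      ∫ ω, u ω * (Real.sign (gstar ω) * |gstar ω| ^ (q - 1)) ∂P = 1) :
    ∀ u : Ω → ℝ, IsSignedMMDensity P K₀ u → MemLp u (ENNReal.ofReal q) P →
      eLpNorm ustar (ENNReal.ofReal q) P ≤ eLpNorm u (ENNReal.ofReal q) P := by
  intro u hu huLq
  have hq1 : 0 < q - 1 := sub_pos.2 hq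
  have hpq : q.HolderConjugate p := hp ▸ .conjExponent hq
  have := hpq.ennrealOfReal
  set m := ∫ ω, gstar ω ∂P
  set N := eLpNorm gstar (ENNReal.ofReal q) P
  have hm : ∫ ω, |gstar ω| ^ q ∂P = m := by
    have h := hcond ustar hustarMs hustarLq
    simp_rw [hustar, div_mul_eq_mul_div,
      Real.mul_sign_mul_abs_rpow_sub_one _ (by positivity : q ≠ 0)] at h
    exact eq_of_div_eq_one (integral_div m _ ▸ h)
  have hm_pos : 0 < m := hm ▸ (integral_nonneg fun ω => by positivity).lt_of_ne' (hm ▸ hEne)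
  have hN_rpow : N ^ q = ENNReal.ofReal m :=
    hm ▸ hgq.eLpNorm_rpow_eq_ofReal_integral (by positivity)
  have hf_norm : eLpNorm (fun ω => Real.sign (gstar ω) * |gstar ω| ^ (q - 1)) (ENNReal.ofReal p) P
      = N ^ (q - 1) := by
    rw [eLpNorm_sign_mul_abs_rpow _ _ hq1, ← ofReal_mul hpq.symm.nonneg, hp,
      div_mul_cancel₀ _ hq1.ne']
  rw [hustar, eLpNorm_div_eq_inv_rpow_sub_one (by positivity) hm_pos hgq.eLpNorm_ne_top hN_rpow,
    ← hf_norm]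
  exact inv_eLpNorm_le_of_integral_mul_eq_one huLq.1
    ((Real.measurable_sign.comp_aemeasurable hgq.1.aemeasurable).mul
      (hgq.1.aemeasurable.abs.pow_const _)).aestronglyMeasurable (hcond u hu huLq)

/-- Sufficiency: if `E[u ⬝ sgn(g*)|g*|^{q-1}] = 1` for every signed martingale density
`u ∈ L^q`, then `u* = g*/E[g*]` is the `q`-optimal density. -/
theorem qoptimal_sufficient_condition
    {Ω : Type*} [MeasurableSpace Ω] (P : Measure Ω) [IsProbabilityMeasure P]
    (q p : ℝ) (hq : 1 < q) (hp : p = q / (q - 1))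
    (K₀ : Submodule ℝ (Ω → ℝ))
    (gstar : Ω → ℝ) (hgq : MemLp gstar (ENNReal.ofReal q) P)
    (hEne : ∫ ω, gstar ω ∂P ≠ 0)
    (ustar : Ω → ℝ)
    (hustar : ustar = fun ω => gstar ω / ∫ ω', gstar ω' ∂P)
    (hustarMs : IsSignedMMDensity P K₀ ustar)
    (hustarLq : MemLp ustar (ENNReal.ofReal q) P)
    (hcond : ∀ u : Ω → ℝ, IsSignedMMDensity P K₀ u → MemLp u (ENNReal.ofReal q) P →
      ∫ ω, u ω * (Real.sign (gstar ω) * |gstar ω| ^ (q - 1)) ∂P = 1) :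
    ∀ u : Ω → ℝ, IsSignedMMDensity P K₀ u → MemLp u (ENNReal.ofReal q) P →
      eLpNorm ustar (ENNReal.ofReal q) P ≤ eLpNorm u (ENNReal.ofReal q) P :=
  qoptimal_sufficient_condition_general P q p hq hp K₀ gstar hgq hEne ustar hustar hustarMs hustarLq
    hcond
end

section
/- Stopped-path improvement: let p > 1, let G be a continuous adapted process with G_0 = 0, let τ = inf{t ≥ 0 : G_t > 1}, and suppose P(G_∞ > 1 + ε/2) ≥ ε/2 for some ε ∈ (0,1). Then ‖1 - G_∞‖_p^p ≥ ‖1 - G_τ‖_p^p + (ε/2)^{p+1}, where G_τ := G_∞ on {τ = ∞}. -/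
open MeasureTheory ENNReal

/-!
Let `τ` be the first time `G` exceeds `1`. By continuity and `G_0 = 0`, either `G` never exceeds `1`
(so `G_τ = G_∞`) or `G_τ = 1`; in both cases `|1 - G_τ|^p ≤ |1 - G_∞|^p`. On `{G_∞ > 1 + ε/2}` the
path certainly exceeds `1`, so there `|1 - G_τ|^p = 0` while `|1 - G_∞|^p ≥ (ε/2)^p`. Integrating
the nonnegative gap and using Markov's inequality gives the gain `(ε/2)^p · P(G_∞ > 1 + ε/2)`.
-/

section FirstPassage

variable {α : Type*} [CompleteLinearOrder α] [TopologicalSpace α] [OrderTopology α]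

def firstPassageTime (g : α → ℝ) (a : ℝ) : α := sInf {t | a < g t}

theorem le_apply_firstPassageTime {g : α → ℝ} {a : ℝ} (hg : Continuous g)
    (hS : {t | a < g t}.Nonempty) : a ≤ g (firstPassageTime g a) :=
  closure_minimal (fun _ ht => le_of_lt ht) (isClosed_le continuous_const hg)
    (sInf_mem_closure hS)

variable [DenselyOrdered α]

theorem apply_firstPassageTime_le {g : α → ℝ} {a : ℝ} (hg : Continuous g) (h0 : g ⊥ ≤ a) :
    g (firstPassageTime g a) ≤ a := by
  set τ := firstPassageTime g a
  rcases eq_bot_or_bot_lt τ with hτ | hτ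
  · rwa [hτ]
  have hbefore : Set.Iio τ ⊆ {t | g t ≤ a} := fun t ht => show g t ≤ a from
    not_lt.mp fun hlt => (sInf_le hlt : τ ≤ t).not_gt ht
  have hτ_mem : τ ∈ closure (Set.Iio τ) := by
    rw [closure_Iio' ⟨⊥, hτ⟩]
    exact Set.self_mem_Iic
  exact closure_minimal hbefore (isClosed_le hg continuous_const) hτ_mem

theorem apply_firstPassageTime_eq {g : α → ℝ} {a : ℝ} (hg : Continuous g) (h0 : g ⊥ ≤ a)
    (hS : {t | a < g t}.Nonempty) : g (firstPassageTime g a) = a :=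
  le_antisymm (apply_firstPassageTime_le hg h0) (le_apply_firstPassageTime hg hS)

theorem apply_firstPassageTime_eq_or_eq_top {g : α → ℝ} {a : ℝ} (hg : Continuous g)
    (h0 : g ⊥ ≤ a) :
    g (firstPassageTime g a) = a ∨ g (firstPassageTime g a) = g ⊤ := by
  rcases Set.eq_empty_or_nonempty {t | a < g t} with hS | hS
  · right
    rw [firstPassageTime, hS, sInf_empty]
  · exact Or.inl (apply_firstPassageTime_eq hg h0 hS)

theorem abs_sub_apply_firstPassageTime_rpow_le {g : α → ℝ} {a p : ℝ} (hg : Continuous g)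
    (h0 : g ⊥ ≤ a) (hp : 0 < p) :
    |a - g (firstPassageTime g a)| ^ p ≤ |a - g ⊤| ^ p := by
  rcases apply_firstPassageTime_eq_or_eq_top hg h0 with h | h
  · rw [h, sub_self, abs_zero, Real.zero_rpow hp.ne']
    positivity
  · rw [h]

theorem abs_sub_apply_firstPassageTime_rpow_add_le {g : α → ℝ} {a p δ : ℝ} (hg : Continuous g)
    (h0 : g ⊥ ≤ a) (hp : 0 < p) (hδ : 0 ≤ δ) (hend : a + δ < g ⊤) :
    |a - g (firstPassageTime g a)| ^ p + δ ^ p ≤ |a - g ⊤| ^ p := by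
  rw [apply_firstPassageTime_eq hg h0 ⟨⊤, show a < g ⊤ by linarith⟩, sub_self, abs_zero,
    Real.zero_rpow hp.ne', zero_add, abs_sub_comm, abs_of_nonneg (by linarith)]
  exact Real.rpow_le_rpow hδ (by linarith) hp.le

end FirstPassage

theorem mul_measureReal_le_integral_of_forall_mem_le {Ω : Type*} [MeasurableSpace Ω]
    {μ : Measure Ω} [IsFiniteMeasure μ] {f : Ω → ℝ} {s : Set Ω} {c : ℝ} (hc : 0 ≤ c)
    (hf : Integrable f μ) (hf0 : ∀ ω, 0 ≤ f ω) (hs : ∀ ω ∈ s, c ≤ f ω) :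
    c * μ.real s ≤ ∫ ω, f ω ∂μ :=
  calc c * μ.real s ≤ c * μ.real {ω | c ≤ f ω} :=
        mul_le_mul_of_nonneg_left (measureReal_mono hs) hc
    _ ≤ ∫ ω, f ω ∂μ := mul_meas_ge_le_integral_of_nonneg (ae_of_all _ hf0) hf c

/-- Stopped-path improvement: for a continuous process `G` with `G_0 = 0`,
`τ = inf{t : G_t > 1}` and `P(G_∞ > 1 + ε/2) ≥ ε/2`, one has
`‖1 - G_∞‖_p^p ≥ ‖1 - G_τ‖_p^p + (ε/2)^{p+1}`. -/
theorem stopped_path_improvement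
    {Ω : Type*} [MeasurableSpace Ω] (P : Measure Ω) [IsProbabilityMeasure P]
    (p : ℝ) (hp : 1 < p) (ε : ℝ) (hε : ε ∈ Set.Ioo (0 : ℝ) 1)
    (G : ℝ≥0∞ → Ω → ℝ)
    (hGcont : ∀ ω, Continuous fun t => G t ω)
    (hG0 : ∀ ω, G 0 ω = 0)
    (hprob : ε / 2 ≤ (P {ω | 1 + ε / 2 < G ⊤ ω}).toReal)
    (hintInf : Integrable (fun ω => |1 - G ⊤ ω| ^ p) P)
    (hintτ : Integrable (fun ω => |1 - G (sInf {t : ℝ≥0∞ | 1 < G t ω}) ω| ^ p) P) :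
    (∫ ω, |1 - G (sInf {t : ℝ≥0∞ | 1 < G t ω}) ω| ^ p ∂P) + (ε / 2) ^ (p + 1) ≤
      ∫ ω, |1 - G ⊤ ω| ^ p ∂P := by
  have hp0 : 0 < p := by linarith
  have hδ : 0 < ε / 2 := by linarith [hε.1]
  have h0 : ∀ ω, G ⊥ ω ≤ 1 := fun ω => by rw [bot_eq_zero, hG0]; exact zero_le_one
  have hgain : (ε / 2) ^ p * P.real {ω | 1 + ε / 2 < G ⊤ ω} ≤
      ∫ ω, (|1 - G ⊤ ω| ^ p - |1 - G (sInf {t : ℝ≥0∞ | 1 < G t ω}) ω| ^ p) ∂P :=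
    mul_measureReal_le_integral_of_forall_mem_le (by positivity) (hintInf.sub hintτ)
      (fun ω => sub_nonneg.mpr (abs_sub_apply_firstPassageTime_rpow_le (hGcont ω) (h0 ω) hp0))
      (fun ω hω => le_sub_iff_add_le'.mpr
        (abs_sub_apply_firstPassageTime_rpow_add_le (hGcont ω) (h0 ω) hp0 hδ.le hω))
  rw [integral_sub hintInf hintτ] at hgain
  have hbound : (ε / 2) ^ (p + 1) ≤ (ε / 2) ^ p * P.real {ω | 1 + ε / 2 < G ⊤ ω} := by
    rw [Real.rpow_add_one hδ.ne']
    exact mul_le_mul_of_nonneg_left hprob (by positivity)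
  linarith
end
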